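/- Let (R, m) be a commutative Noetherian local ring and let M be a finitely generated, faithful, torsionless R-module. If A and B are finitely generated Z(E)-modules and B is torsion-free as an R-module, then every R-linear map A → B is Z(E)-linear; that is, Hom_R(A, B) = Hom_{Z(E)}(A, B). -/

import Mathlib

open Submodule

section Aux
variable {R M : Type*} [CommRing R] [AddCommGroup M] [Module R M]

/-- Associated primes of `M` are among those of a submodule `N` and of `M ⧸ N`. -/
theorem ass_subset_union (N : Submodule R M) :
    associatedPrimes R M ⊆ associatedPrimes R N ∪ associatedPrimes R (M ⧸ N) := by
  exact associatedPrimes.subset_union_of_exact (f := N.subtype) (g := N.mkQ)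
    N.injective_subtype (LinearMap.exact_subtype_mkQ N)

end Aux

section Fin
variable (R : Type*) [CommRing R] [IsNoetherianRing R]

theorem ass_quot_finite : ∀ N : Ideal R, (associatedPrimes R (R ⧸ N)).Finite := by
  have wf : WellFounded ((· > ·) : Ideal R → Ideal R → Prop) :=
    (isNoetherian_iff (R:=R) (M:=R)).mp inferInstance
  intro N
  induction N using WellFounded.induction wf with
  | _ N IH =>
  by_cases hN : N = ⊤
  · subst hN
    have : Subsingleton (R ⧸ (⊤ : Ideal R)) :=
      Submodule.Quotient.subsingleton_iff.mpr rfl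
    rw [associatedPrimes.eq_empty_of_subsingleton]
    exact Set.finite_empty
  · have : Nontrivial (R ⧸ N) := Submodule.Quotient.nontrivial_iff.mpr hN
    obtain ⟨p, hp⟩ := associatedPrimes.nonempty R (R ⧸ N)
    obtain ⟨hprime, xb, hxb⟩ := isAssociatedPrime_iff.mp hp
    obtain ⟨x, rfl⟩ := Submodule.mkQ_surjective N xb
    have hx0 : N.mkQ x ≠ 0 := by
      intro h0
      apply hprime.ne_top
      rw [hxb, h0]
      rw [Submodule.colon_singleton_zero]
    set N' : Ideal R := N ⊔ Submodule.span R {x} with hN'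
    have hlt : N < N' := by
      rw [hN', lt_iff_le_and_ne]
      refine ⟨le_sup_left, ?_⟩
      intro he
      apply hx0
      rw [Submodule.mkQ_apply, Submodule.Quotient.mk_eq_zero]
      have hx : x ∈ N' := le_sup_right (a := N) (Submodule.mem_span_singleton_self x)
      rw [hN', ← he] at hx
      exact hx
    have h1 : (associatedPrimes R (R ⧸ N)) ⊆
        associatedPrimes R (Submodule.span R {N.mkQ x}) ∪
        associatedPrimes R ((R ⧸ N) ⧸ (Submodule.span R {N.mkQ x})) :=
      ass_subset_union _
  -- the cyclic submodule is isomorphic to R ⧸ p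
    have e1 : (R ⧸ p) ≃ₗ[R] Submodule.span R {N.mkQ x} := by
      have hker : LinearMap.ker (LinearMap.toSpanSingleton R (R ⧸ N) (N.mkQ x)) = p := by
        ext a
        rw [LinearMap.mem_ker, hxb, Submodule.mem_colon_singleton, Submodule.mem_bot]
        rfl
      have := (LinearMap.toSpanSingleton R (R ⧸ N) (N.mkQ x)).quotKerEquivRange
      rw [hker, ← LinearMap.span_singleton_eq_range] at this
      exact this
    have h2 : associatedPrimes R (Submodule.span R {N.mkQ x}) = {p.radical} := by
      rw [← LinearEquiv.AssociatedPrimes.eq e1]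
      exact associatedPrimes.eq_singleton_of_isPrimary hprime.isPrimary
    have e2 : ((R ⧸ N) ⧸ (Submodule.span R {N.mkQ x})) ≃ₗ[R] R ⧸ N' := by
      have hmap : Submodule.span R {N.mkQ x} =
          (Submodule.span R {x}).map N.mkQ := by
        rw [Submodule.map_span, Set.image_singleton]
      rw [hmap, hN']
      exact Submodule.quotientQuotientEquivQuotientSup N (Submodule.span R {x})
    have h3 : associatedPrimes R ((R ⧸ N) ⧸ (Submodule.span R {N.mkQ x})) =
        associatedPrimes R (R ⧸ N') := LinearEquiv.AssociatedPrimes.eq e2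
    refine Set.Finite.subset ?_ h1
    rw [h2, h3]
    exact Set.Finite.union (Set.finite_singleton _) (IH N' hlt)

theorem ass_finite : (associatedPrimes R R).Finite := by
  have := ass_quot_finite R ⊥
  rwa [LinearEquiv.AssociatedPrimes.eq (Submodule.quotEquivOfEqBot (⊥ : Ideal R) rfl)] at this

end Fin

section ZD
variable {R : Type*} [CommRing R] [IsNoetherianRing R]

theorem exists_nzd_of_faithful (J : Ideal R)
    (h : ∀ c : R, (∀ t ∈ J, t * c = 0) → c = 0) :
    ∃ t ∈ J, t ∈ nonZeroDivisors R := by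
  by_contra hc
  push_neg at hc
  have hsub : (J : Set R) ⊆ ⋃ p ∈ (ass_finite R).toFinset, ((p : Ideal R) : Set R) := by
    intro t ht
    have ht2 : t ∈ {r : R | ∃ x : R, x ≠ 0 ∧ r • x = 0} := by
      have := hc t ht
      rw [mem_nonZeroDivisors_iff_right] at this
      push_neg at this
      obtain ⟨x, hx1, hx2⟩ := this
      exact ⟨x, hx2, by rw [smul_eq_mul, mul_comm]; exact hx1⟩
    rw [← biUnion_associatedPrimes_eq_zero_divisors R R] at ht2
    simpa only [Set.mem_iUnion, exists_prop, Set.Finite.mem_toFinset] using ht2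
  have := (Ideal.subset_union_prime (R := R) (ι := Ideal R) (f := fun p => p)
    ⊥ ⊥ (fun p hp _ _ => ((ass_finite R).mem_toFinset.mp hp).isPrime)).mp hsub
  obtain ⟨p, hps, hJp⟩ := this
  obtain ⟨hprime, c, hcp⟩ := isAssociatedPrime_iff.mp ((ass_finite R).mem_toFinset.mp hps)
  have hc0 : c ≠ 0 := by
    rintro rfl
    apply hprime.ne_top
    rw [hcp, Submodule.colon_singleton_zero]
  apply hc0
  apply h
  intro t ht
  have := hJp ht
  rw [hcp, Submodule.mem_colon_singleton, Submodule.mem_bot, smul_eq_mul] at this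
  exact this

end ZD



/-- Let `(R, m)` be a commutative Noetherian local ring, `M` a finitely generated
faithful torsionless `R`-module, and `Z(E)` the center of `E = End_R(M)`.  If `A` and `B` are
finitely generated `Z(E)`-modules and `B` is torsion-free as an `R`-module, then every
`R`-linear map `A → B` is `Z(E)`-linear. -/
theorem statement4 (R M : Type) [CommRing R] [IsNoetherianRing R] [IsLocalRing R]
    [AddCommGroup M] [Module R M] [Module.Finite R M]
    (hfaithful : Module.annihilator R M = ⊥)
    (htorsionless : Function.Injective (Module.Dual.eval R M))
    (A B : Type) [AddCommGroup A] [AddCommGroup B]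
    [Module (Subalgebra.center R (Module.End R M)) A]
    [Module (Subalgebra.center R (Module.End R M)) B]
    [Module.Finite (Subalgebra.center R (Module.End R M)) A]
    [Module.Finite (Subalgebra.center R (Module.End R M)) B]
    [Module R A] [Module R B]
    [IsScalarTower R (Subalgebra.center R (Module.End R M)) A]
    [IsScalarTower R (Subalgebra.center R (Module.End R M)) B]
    (hBtf : Submodule.torsion R B = ⊥) :
    ∀ (f : A →ₗ[R] B) (s : Subalgebra.center R (Module.End R M)) (a : A),
      f (s • a) = s • f a := by
  -- the trace ideal of M
  set τ : Ideal R := Ideal.span {t | ∃ (l : Module.Dual R M) (x : M), l x = t} with hτ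
  -- key commutation identity for central endomorphisms
  have key : ∀ (s : Module.End R M), s ∈ Subalgebra.center R (Module.End R M) →
      ∀ (l : Module.Dual R M) (x m : M), l x • s m = l (s x) • m := by
    intro s hs l x m
    have hcomm := Subalgebra.mem_center_iff.mp hs (l.smulRight m)
    have := congrArg (fun g : Module.End R M => g x) hcomm
    simpa using this.symm
  -- the trace ideal has trivial annihilator
  have hann : ∀ c : R, (∀ t ∈ τ, t * c = 0) → c = 0 := by
    intro c hcann
    have hlx : ∀ (l : Module.Dual R M) (x : M), l (c • x) = 0 := by
      intro l x
      have : l x * c = 0 := hcann _ (Ideal.subset_span ⟨l, x, rfl⟩)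
      rw [map_smul, smul_eq_mul, mul_comm]
      exact this
    have hM : ∀ x : M, c • x = 0 := by
      intro x
      apply htorsionless
      ext l
      simpa [Module.Dual.eval] using hlx l x
    have : c ∈ Module.annihilator R M := Module.mem_annihilator.mpr hM
    rwa [hfaithful, Submodule.mem_bot] at this
  obtain ⟨t, htτ, htnzd⟩ := exists_nzd_of_faithful τ hann
  -- t multiplies every central endomorphism into R
  have hsc : ∀ s : Subalgebra.center R (Module.End R M),
      ∃ r : R, t • s = r • (1 : Subalgebra.center R (Module.End R M)) := by
    intro s
    set Js : Ideal R :=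
      { carrier := {u : R | ∃ r : R, ∀ m : M, u • (s : Module.End R M) m = r • m}
        add_mem' := by
          rintro u v ⟨r, hr⟩ ⟨r', hr'⟩
          exact ⟨r + r', fun m => by rw [add_smul, hr, hr', add_smul]⟩
        zero_mem' := ⟨0, fun m => by simp⟩
        smul_mem' := by
          rintro cc u ⟨r, hr⟩
          exact ⟨cc * r, fun m => by
            rw [smul_eq_mul, mul_smul, hr, mul_smul]⟩ } with hJs
    have hτJ : τ ≤ Js := by
      rw [hτ, Ideal.span_le]
      rintro _ ⟨l, x, rfl⟩
      exact ⟨l ((s : Module.End R M) x), fun m => key s s.2 l x m⟩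
    obtain ⟨r, hr⟩ := hτJ htτ
    refine ⟨r, ?_⟩
    ext m
    exact hr m
  intro f s a
  obtain ⟨r, hr⟩ := hsc s
  have hA : t • (s • a) = r • a := by
    rw [← smul_assoc, hr, smul_assoc, one_smul]
  have hB : t • (s • f a) = r • f a := by
    rw [← smul_assoc, hr, smul_assoc, one_smul]
  have hzero : t • (f (s • a) - s • f a) = 0 := by
    rw [smul_sub, ← map_smul, hA, hB, map_smul, sub_self]
  have : f (s • a) - s • f a ∈ Submodule.torsion R B :=
    ⟨⟨t, htnzd⟩, hzero⟩
  rw [hBtf, Submodule.mem_bot, sub_eq_zero] at this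
  exact this
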